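/- arXiv:1712.02878 — 2 statements merged into one kernel-verified Lean document; each statement's English description precedes it below -/
import Mathlib

section
/- Let X ⊆ S_n be a finite set of permutations such that d(x,y) = n-1 for all distinct x, y ∈ X (i.e., no two share an adjacency). Then π ∈ S_n is a breakpoint median of X (minimizes the total breakpoint distance to X) if and only if A_π ⊆ ⋃_{x∈X} A_x. -/
open Finset

/-- The set of adjacencies of a permutation of `{1,...,n}`: unordered pairs of
consecutive entries. -/
def bpAdj {n : ℕ} (x : Equiv.Perm (Fin n)) : Finset (Sym2 (Fin n)) :=
  Finset.image (fun i : Fin (n - 1) =>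
    s(x ⟨i.val, by have := i.isLt; omega⟩, x ⟨i.val + 1, by have := i.isLt; omega⟩))
    Finset.univ

/-- The breakpoint distance `d(x,y) = (n-1) - |A_x ∩ A_y|`. -/
def bpDist {n : ℕ} (x y : Equiv.Perm (Fin n)) : ℕ :=
  (n - 1) - (bpAdj x ∩ bpAdj y).card

/-- Total breakpoint distance of `z` to a finite set `X`. -/
def bpTotal {n : ℕ} (z : Equiv.Perm (Fin n)) (X : Finset (Equiv.Perm (Fin n))) : ℕ :=
  ∑ y ∈ X, bpDist z y

/-- `π` is a breakpoint median of `X`: it minimizes the total breakpoint distance to `X`. -/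
def IsBpMedian {n : ℕ} (π : Equiv.Perm (Fin n)) (X : Finset (Equiv.Perm (Fin n))) : Prop :=
  ∀ σ : Equiv.Perm (Fin n), bpTotal π X ≤ bpTotal σ X

/-! Pairwise disjointness of the adjacency sets `A_x` turns `Σ_{x ∈ X} |A_π ∩ A_x|` into
`|A_π ∩ U|` with `U = ⋃_{x ∈ X} A_x`, so `d_T(π, X) = |X| (n - 1) - |A_π ∩ U|`. Since
`|A_π| = n - 1`, the total distance is minimal exactly when `A_π ⊆ U`, and this minimum is
attained by any member of `X`. -/

variable {n : ℕ}

lemma card_bpAdj (x : Equiv.Perm (Fin n)) : #(bpAdj x) = n - 1 := by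
  rw [bpAdj, card_image_of_injective _ ?_, card_univ, Fintype.card_fin]
  intro i j h
  rcases Sym2.eq_iff.mp h with ⟨h₁, h₂⟩ | ⟨h₁, h₂⟩ <;>
  · have e₁ := congrArg Fin.val (x.injective h₁)
    have e₂ := congrArg Fin.val (x.injective h₂)
    exact Fin.ext (by simp only at e₁ e₂; omega)

lemma card_bpAdj_inter_le (x : Equiv.Perm (Fin n)) (s : Finset (Sym2 (Fin n))) :
    #(bpAdj x ∩ s) ≤ n - 1 :=
  (card_le_card inter_subset_left).trans (card_bpAdj x).le

lemma bpAdj_subset_iff_card_inter (x : Equiv.Perm (Fin n)) (s : Finset (Sym2 (Fin n))) :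
    bpAdj x ⊆ s ↔ #(bpAdj x ∩ s) = n - 1 := by
  rw [← inter_eq_left]
  refine ⟨fun h => by rw [h, card_bpAdj], fun h => ?_⟩
  exact eq_of_subset_of_card_le inter_subset_left (by rw [h, card_bpAdj])

lemma bpDist_add_card_inter (x y : Equiv.Perm (Fin n)) :
    bpDist x y + #(bpAdj x ∩ bpAdj y) = n - 1 :=
  Nat.sub_add_cancel (card_bpAdj_inter_le x _)

lemma disjoint_bpAdj_of_bpDist_eq {x y : Equiv.Perm (Fin n)} (h : bpDist x y = n - 1) :
    Disjoint (bpAdj x) (bpAdj y) := by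
  have := bpDist_add_card_inter x y
  exact disjoint_iff_inter_eq_empty.mpr (card_eq_zero.mp (by omega))

lemma bpTotal_add_card_inter_biUnion {X : Finset (Equiv.Perm (Fin n))}
    (hX : (X : Set (Equiv.Perm (Fin n))).PairwiseDisjoint bpAdj) (z : Equiv.Perm (Fin n)) :
    bpTotal z X + #(bpAdj z ∩ X.biUnion bpAdj) = #X * (n - 1) := by
  have hX' : (X : Set (Equiv.Perm (Fin n))).PairwiseDisjoint (bpAdj z ∩ bpAdj ·) :=
    fun x hx y hy hxy => (hX hx hy hxy).mono inter_subset_right inter_subset_right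
  rw [inter_biUnion, card_biUnion hX', bpTotal, ← sum_add_distrib]
  simp only [bpDist_add_card_inter, sum_const, smul_eq_mul]

/-- If the permutations of a nonempty set X are at pairwise maximal breakpoint
distance n-1, then π is a breakpoint median of X iff A_π ⊆ ⋃_{x ∈ X} A_x. -/
theorem median_iff_adj_subset_union (n : ℕ) (X : Finset (Equiv.Perm (Fin n)))
    (hne : X.Nonempty)
    (hmax : ∀ x ∈ X, ∀ y ∈ X, x ≠ y → bpDist x y = n - 1)
    (π : Equiv.Perm (Fin n)) :
    IsBpMedian π X ↔ bpAdj π ⊆ X.biUnion bpAdj := by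
  have hX : (X : Set (Equiv.Perm (Fin n))).PairwiseDisjoint bpAdj :=
    fun x hx y hy hxy => disjoint_bpAdj_of_bpDist_eq (hmax x hx y hy hxy)
  obtain ⟨x, hx⟩ := hne
  have hxU := (bpAdj_subset_iff_card_inter x _).mp (subset_biUnion_of_mem bpAdj hx)
  have htotal := bpTotal_add_card_inter_biUnion hX
  rw [bpAdj_subset_iff_card_inter]
  constructor
  · intro hmed
    have := hmed x
    have := htotal π
    have := htotal x
    have := card_bpAdj_inter_le π (X.biUnion bpAdj)
    omega
  · intro hπ σ
    have := htotal π
    have := htotal σ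
    have := card_bpAdj_inter_le σ (X.biUnion bpAdj)
    omega
end

section
/- Let X = {x_1, x_2, x_3} ⊆ S_n with the labels chosen so that d_T(x_3, X) = min_i d_T(x_i, X). Then for any breakpoint median π of X, |A_π \ (A_{x_1} ∪ A_{x_2} ∪ A_{x_3})| ≤ |A_{x_1} ∩ A_{x_2}| − |A_{x_1} ∩ A_{x_2} ∩ A_{x_3}|. -/
open Finset

lemma bpAdj_card {n : ℕ} (x : Equiv.Perm (Fin n)) : (bpAdj x).card = n - 1 := by
  rw [bpAdj, Finset.card_image_of_injective _ ?_, Finset.card_univ, Fintype.card_fin]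
  intro a b h
  rw [Sym2.eq_iff] at h
  rcases h with ⟨h1, _⟩ | ⟨h1, h2⟩
  · exact Fin.ext (by simpa using congrArg Fin.val (x.injective h1))
  · have e1 := congrArg Fin.val (x.injective h1)
    have e2 := congrArg Fin.val (x.injective h2)
    simp at e1 e2
    omega

lemma bpInter_card_le {n : ℕ} (x y : Equiv.Perm (Fin n)) :
    (bpAdj x ∩ bpAdj y).card ≤ n - 1 := by
  calc (bpAdj x ∩ bpAdj y).card ≤ (bpAdj x).card :=
        Finset.card_le_card Finset.inter_subset_left
    _ = n - 1 := bpAdj_card x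

lemma sum_inter_of_total_le {n : ℕ} (z w : Equiv.Perm (Fin n))
    (X : Finset (Equiv.Perm (Fin n))) (h : bpTotal w X ≤ bpTotal z X) :
    ∑ y ∈ X, (bpAdj z ∩ bpAdj y).card ≤ ∑ y ∈ X, (bpAdj w ∩ bpAdj y).card := by
  have hz : ∀ u : Equiv.Perm (Fin n),
      bpTotal u X + ∑ y ∈ X, (bpAdj u ∩ bpAdj y).card = X.card * (n - 1) := by
    intro u
    have hterm : ∀ y ∈ X, bpDist u y + (bpAdj u ∩ bpAdj y).card = n - 1 := by
      intro y _
      have := bpInter_card_le u y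
      unfold bpDist
      omega
    rw [bpTotal, ← Finset.sum_add_distrib, Finset.sum_congr rfl hterm,
      Finset.sum_const, smul_eq_mul]
  have h1 := hz w
  have h2 := hz z
  omega

section Counting

variable {α : Type*} [DecidableEq α]

/-- All-distinct case counting argument. -/
lemma count_main (P A₁ A₂ A₃ : Finset α) (m : ℕ)
    (hP : P.card = m) (hA3 : A₃.card = m)
    (hkey : (A₃ ∩ A₁).card + ((A₃ ∩ A₂).card + (A₃ ∩ A₃).card)
      ≤ (P ∩ A₁).card + ((P ∩ A₂).card + (P ∩ A₃).card)) :
    (P \ (A₁ ∪ A₂ ∪ A₃)).card ≤ (A₁ ∩ A₂).card - (A₁ ∩ A₂ ∩ A₃).card := by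
  have h33 : (A₃ ∩ A₃).card = m := by rw [Finset.inter_self]; exact hA3
  have e1 : (P ∩ (A₁ ∪ A₂)).card + (P ∩ (A₁ ∩ A₂)).card
      = (P ∩ A₁).card + (P ∩ A₂).card := by
    have hu : (P ∩ A₁) ∪ (P ∩ A₂) = P ∩ (A₁ ∪ A₂) := by ext e; simp; tauto
    have hi : (P ∩ A₁) ∩ (P ∩ A₂) = P ∩ (A₁ ∩ A₂) := by ext e; simp; tauto
    have := Finset.card_union_add_card_inter (P ∩ A₁) (P ∩ A₂)
    rw [hu, hi] at this
    exact this
  have e2 : (P \ (A₁ ∪ A₂ ∪ A₃)).card + (P ∩ (A₁ ∪ A₂ ∪ A₃)).card = m := by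
    rw [Finset.card_sdiff_add_card_inter]; exact hP
  have e3 : (P ∩ (A₁ ∪ A₂ ∪ A₃)).card
      = (P ∩ (A₁ ∪ A₂)).card + ((P ∩ A₃) \ (A₁ ∪ A₂)).card := by
    rw [← Finset.card_union_of_disjoint (by
      rw [Finset.disjoint_left]
      intro e he he'
      simp at he he'
      tauto)]
    congr 1
    ext e; simp; tauto
  have e4 : ((P ∩ A₃) ∩ (A₁ ∪ A₂)).card + ((P ∩ A₃) \ (A₁ ∪ A₂)).card
      = (P ∩ A₃).card := Finset.card_inter_add_card_sdiff _ _
  have e5 : (A₃ ∩ (A₁ ∪ A₂)).card + (A₃ ∩ (A₁ ∩ A₂)).card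
      = (A₃ ∩ A₁).card + (A₃ ∩ A₂).card := by
    have hu : (A₃ ∩ A₁) ∪ (A₃ ∩ A₂) = A₃ ∩ (A₁ ∪ A₂) := by ext e; simp; tauto
    have hi : (A₃ ∩ A₁) ∩ (A₃ ∩ A₂) = A₃ ∩ (A₁ ∩ A₂) := by ext e; simp; tauto
    have := Finset.card_union_add_card_inter (A₃ ∩ A₁) (A₃ ∩ A₂)
    rw [hu, hi] at this
    exact this
  have i1 : ((P ∩ A₃) ∩ (A₁ ∪ A₂)).card ≤ (A₃ ∩ (A₁ ∪ A₂)).card :=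
    Finset.card_le_card (by intro e he; simp at he ⊢; tauto)
  have i2 : (P ∩ (A₁ ∩ A₂)).card ≤ (A₁ ∩ A₂).card :=
    Finset.card_le_card Finset.inter_subset_right
  have hT : (A₁ ∩ A₂ ∩ A₃).card = (A₃ ∩ (A₁ ∩ A₂)).card := by
    rw [Finset.inter_comm]
  omega

/-- Case A₁ = A₂. -/
lemma count_eq12 (P A₁ A₃ : Finset α) (m : ℕ)
    (hP : P.card = m) (hA3 : A₃.card = m) (hA1 : A₁.card = m)
    (hkey : (A₃ ∩ A₁).card + (A₃ ∩ A₃).card ≤ (P ∩ A₁).card + (P ∩ A₃).card) :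
    (P \ (A₁ ∪ A₁ ∪ A₃)).card ≤ (A₁ ∩ A₁).card - (A₁ ∩ A₁ ∩ A₃).card := by
  have h33 : (A₃ ∩ A₃).card = m := by rw [Finset.inter_self]; exact hA3
  simp only [Finset.union_self, Finset.inter_self]
  have e2 : (P \ (A₁ ∪ A₃)).card + (P ∩ (A₁ ∪ A₃)).card = m := by
    rw [Finset.card_sdiff_add_card_inter]; exact hP
  have i1 : (P ∩ A₁).card ≤ (P ∩ (A₁ ∪ A₃)).card :=
    Finset.card_le_card (by intro e he; simp at he ⊢; tauto)
  have i2 : (P ∩ A₃).card ≤ (P ∩ (A₁ ∪ A₃)).card :=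
    Finset.card_le_card (by intro e he; simp at he ⊢; tauto)
  have hc : (A₃ ∩ A₁).card = (A₁ ∩ A₃).card := by rw [Finset.inter_comm]
  omega

/-- Case A₃ = A₁. -/
lemma count_eq13 (P A₁ A₂ : Finset α) (m : ℕ)
    (hP : P.card = m) (hA1 : A₁.card = m)
    (hkey : (A₁ ∩ A₁).card + (A₁ ∩ A₂).card ≤ (P ∩ A₁).card + (P ∩ A₂).card) :
    (P \ (A₁ ∪ A₂ ∪ A₁)).card ≤ (A₁ ∩ A₂).card - (A₁ ∩ A₂ ∩ A₁).card := by
  have h11 : (A₁ ∩ A₁).card = m := by rw [Finset.inter_self]; exact hA1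
  have hU : A₁ ∪ A₂ ∪ A₁ = A₁ ∪ A₂ := by ext e; simp; tauto
  have hI : A₁ ∩ A₂ ∩ A₁ = A₁ ∩ A₂ := by ext e; simp; tauto
  rw [hU, hI]
  have e1 : (P ∩ (A₁ ∪ A₂)).card + (P ∩ (A₁ ∩ A₂)).card
      = (P ∩ A₁).card + (P ∩ A₂).card := by
    have hu : (P ∩ A₁) ∪ (P ∩ A₂) = P ∩ (A₁ ∪ A₂) := by ext e; simp; tauto
    have hi : (P ∩ A₁) ∩ (P ∩ A₂) = P ∩ (A₁ ∩ A₂) := by ext e; simp; tauto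
    have := Finset.card_union_add_card_inter (P ∩ A₁) (P ∩ A₂)
    rw [hu, hi] at this
    exact this
  have e2 : (P \ (A₁ ∪ A₂)).card + (P ∩ (A₁ ∪ A₂)).card = m := by
    rw [Finset.card_sdiff_add_card_inter]; exact hP
  have i2 : (P ∩ (A₁ ∩ A₂)).card ≤ (A₁ ∩ A₂).card :=
    Finset.card_le_card Finset.inter_subset_right
  omega

/-- Case A₃ = A₂. -/
lemma count_eq23 (P A₁ A₂ : Finset α) (m : ℕ)
    (hP : P.card = m) (hA2 : A₂.card = m)
    (hkey : (A₂ ∩ A₁).card + (A₂ ∩ A₂).card ≤ (P ∩ A₁).card + (P ∩ A₂).card) :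
    (P \ (A₁ ∪ A₂ ∪ A₂)).card ≤ (A₁ ∩ A₂).card - (A₁ ∩ A₂ ∩ A₂).card := by
  have h22 : (A₂ ∩ A₂).card = m := by rw [Finset.inter_self]; exact hA2
  have hU : A₁ ∪ A₂ ∪ A₂ = A₁ ∪ A₂ := by ext e; simp
  have hI : A₁ ∩ A₂ ∩ A₂ = A₁ ∩ A₂ := by ext e; simp [and_assoc]
  rw [hU, hI]
  have e1 : (P ∩ (A₁ ∪ A₂)).card + (P ∩ (A₁ ∩ A₂)).card
      = (P ∩ A₁).card + (P ∩ A₂).card := by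
    have hu : (P ∩ A₁) ∪ (P ∩ A₂) = P ∩ (A₁ ∪ A₂) := by ext e; simp; tauto
    have hi : (P ∩ A₁) ∩ (P ∩ A₂) = P ∩ (A₁ ∩ A₂) := by ext e; simp; tauto
    have := Finset.card_union_add_card_inter (P ∩ A₁) (P ∩ A₂)
    rw [hu, hi] at this
    exact this
  have e2 : (P \ (A₁ ∪ A₂)).card + (P ∩ (A₁ ∪ A₂)).card = m := by
    rw [Finset.card_sdiff_add_card_inter]; exact hP
  have i2 : (P ∩ (A₁ ∩ A₂)).card ≤ (A₁ ∩ A₂).card :=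
    Finset.card_le_card Finset.inter_subset_right
  have hc : (A₂ ∩ A₁).card = (A₁ ∩ A₂).card := by rw [Finset.inter_comm]
  omega

end Counting

/-- For X = {x₁,x₂,x₃} with x₃ of minimal total distance, any breakpoint median π
of X satisfies |A_π \ (A_{x₁} ∪ A_{x₂} ∪ A_{x₃})| ≤ |A_{x₁} ∩ A_{x₂}| - |A_{x₁} ∩ A_{x₂} ∩ A_{x₃}|. -/
theorem median_extra_adjacencies_three (n : ℕ) (x₁ x₂ x₃ π : Equiv.Perm (Fin n))
    (hmin₁ : bpTotal x₃ {x₁, x₂, x₃} ≤ bpTotal x₁ {x₁, x₂, x₃})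
    (hmin₂ : bpTotal x₃ {x₁, x₂, x₃} ≤ bpTotal x₂ {x₁, x₂, x₃})
    (hmed : IsBpMedian π {x₁, x₂, x₃}) :
    (bpAdj π \ (bpAdj x₁ ∪ bpAdj x₂ ∪ bpAdj x₃)).card
      ≤ (bpAdj x₁ ∩ bpAdj x₂).card - (bpAdj x₁ ∩ bpAdj x₂ ∩ bpAdj x₃).card := by
  clear hmin₁ hmin₂
  have hP : (bpAdj π).card = n - 1 := bpAdj_card π
  have hkey := sum_inter_of_total_le x₃ π {x₁, x₂, x₃} (hmed x₃)
  clear hmed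
  by_cases h12 : x₁ = x₂
  · subst h12
    by_cases h13 : x₁ = x₃
    · subst h13
      have hX : ({x₁, x₁, x₁} : Finset (Equiv.Perm (Fin n))) = {x₁} := by
        rw [Finset.insert_idem, Finset.pair_eq_singleton]
      rw [hX, Finset.sum_singleton, Finset.sum_singleton] at hkey
      exact count_eq12 _ _ _ (n - 1) hP (bpAdj_card x₁) (bpAdj_card x₁)
        (by omega)
    · have hX : ({x₁, x₁, x₃} : Finset (Equiv.Perm (Fin n))) = {x₁, x₃} :=
        Finset.insert_idem _ _
      rw [hX, Finset.sum_pair h13, Finset.sum_pair h13] at hkey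
      exact count_eq12 _ _ _ (n - 1) hP (bpAdj_card x₃) (bpAdj_card x₁) hkey
  · by_cases h13 : x₁ = x₃
    · subst h13
      have hX : ({x₁, x₂, x₁} : Finset (Equiv.Perm (Fin n))) = {x₁, x₂} := by
        rw [Finset.pair_comm x₂ x₁, Finset.insert_idem]
      rw [hX, Finset.sum_pair h12, Finset.sum_pair h12] at hkey
      exact count_eq13 _ _ _ (n - 1) hP (bpAdj_card x₁) hkey
    · by_cases h23 : x₂ = x₃
      · subst h23
        have hX : ({x₁, x₂, x₂} : Finset (Equiv.Perm (Fin n))) = {x₁, x₂} := by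
          rw [Finset.pair_eq_singleton]
        rw [hX, Finset.sum_pair h12, Finset.sum_pair h12] at hkey
        exact count_eq23 _ _ _ (n - 1) hP (bpAdj_card x₂) hkey
      · have hsum3 : ∀ f : Equiv.Perm (Fin n) → ℕ,
            ∑ y ∈ ({x₁, x₂, x₃} : Finset (Equiv.Perm (Fin n))), f y
              = f x₁ + (f x₂ + f x₃) := by
          intro f
          rw [Finset.sum_insert (by simp [h12, h13]), Finset.sum_pair h23]
        rw [hsum3, hsum3] at hkey
        exact count_main _ _ _ _ (n - 1) hP (bpAdj_card x₃) hkey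
end
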